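/- A finite-index subgroup of a finitely presented group is finitely presented. -/

import Mathlib

/-!
Write `G = F / N` with `F` free of finite rank and `N` the normal closure of a finite set `R` of
relators. The preimage `H` of `K` in `F` has finite index, so it is free (Nielsen–Schreier) of
finite rank (Schreier), and `K ≅ H / N`. As a normal subgroup of `H`, `N` is the normal closure of
the finitely many conjugates `t⁻¹ r t` with `r ∈ R` and `t` running over representatives of the
cosets `F / H`: writing `c⁻¹ = t h` gives `c r c⁻¹ = h⁻¹ (t⁻¹ r t) h`.
-/

/-- A group is finitely presented if it is isomorphic to a quotient of a finitely
generated free group by the normal closure of a finite set of relations. -/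
def FinPresented (G : Type) [Group G] : Prop :=
  ∃ (n : ℕ) (rels : Finset (FreeGroup (Fin n))),
    Nonempty (PresentedGroup (rels : Set (FreeGroup (Fin n))) ≃* G)

theorem finPresented_iff_isFinitelyPresented {G : Type} [Group G] :
    FinPresented G ↔ Group.IsFinitelyPresented G := by
  constructor
  · rintro ⟨n, rels, ⟨e⟩⟩
    exact .equiv e
  · intro _
    obtain ⟨n, s, hs, ⟨e⟩⟩ := Group.IsFinitelyPresented.exists_mulEquiv_presentedGroup (G := G)
    lift s to Finset (FreeGroup (Fin n)) using hs
    exact ⟨n, s, ⟨e.symm⟩⟩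

theorem FreeGroup.finite_of_fg (α : Type*) [Group.FG (FreeGroup α)] : Finite α := by
  have : Group.FG (Abelianization (FreeGroup α)) := QuotientGroup.fg _
  have : AddGroup.FG (FreeAbelianGroup α) := GroupFG.iff_add_fg.mp this
  have : Module.Finite ℤ (FreeAbelianGroup α) := Module.Finite.iff_addGroup_fg.mpr this
  exact Module.Finite.finite_basis (FreeAbelianGroup.basis α)

instance IsFreeGroup.isFinitelyPresented_of_fg (G : Type*) [Group G] [IsFreeGroup G]
    [Group.FG G] : Group.IsFinitelyPresented G := by
  have : Group.FG (FreeGroup (Generators G)) :=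
    Group.fg_of_surjective (f := (toFreeGroup G).toMonoidHom) (toFreeGroup G).surjective
  have := FreeGroup.finite_of_fg (Generators G)
  exact .equiv (toFreeGroup G).symm

namespace Subgroup

variable {F : Type*} [Group F] (H : Subgroup F) (S : Set F)

/-- Taken as a preimage under `H.subtype`, this keeps only the conjugates lying in `H`: all of
them once `normalClosure S ≤ H`. -/
def cosetConjugates : Set H :=
  H.subtype ⁻¹' Set.image2 (fun (q : F ⧸ H) s => q.out⁻¹ * s * q.out) Set.univ S

theorem cosetConjugates_finite [H.FiniteIndex] (hS : S.Finite) : (H.cosetConjugates S).Finite :=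
  (Set.finite_univ.image2 _ hS).preimage H.subtype_injective.injOn

variable {H S}

theorem conj_mem_map_normalClosure_cosetConjugates (hSH : normalClosure S ≤ H) {s : F}
    (hs : s ∈ S) (c : F) :
    c * s * c⁻¹ ∈ (normalClosure (H.cosetConjugates S)).map H.subtype := by
  set t := (QuotientGroup.mk c⁻¹ : F ⧸ H).out
  have ht : t⁻¹ * c⁻¹ ∈ H := QuotientGroup.eq.mp (QuotientGroup.out_eq' _)
  have hst : t⁻¹ * s * t ∈ H := by
    simpa using hSH ((normalClosure_normal (s := S)).conj_mem s (subset_normalClosure hs) t⁻¹)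
  let h : H := ⟨t⁻¹ * c⁻¹, ht⟩
  have hconj : (⟨t⁻¹ * s * t, hst⟩ : H) ∈ normalClosure (H.cosetConjugates S) :=
    subset_normalClosure ⟨_, trivial, s, hs, rfl⟩
  refine ⟨h⁻¹ * _ * h, by simpa using normalClosure_normal.conj_mem _ hconj h⁻¹, ?_⟩
  simp only [h, coe_subtype, coe_mul, coe_inv]
  group

theorem normalClosure_cosetConjugates (hSH : normalClosure S ≤ H) :
    normalClosure (H.cosetConjugates S) = (normalClosure S).subgroupOf H := by
  apply le_antisymm
  · refine normalClosure_le_normal ?_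
    rintro x ⟨q, -, s, hs, hx⟩
    have hx : (x : F) = q.out⁻¹ * s * q.out := hx.symm
    simpa [mem_subgroupOf, hx] using
      normalClosure_normal.conj_mem s (subset_normalClosure hs) q.out⁻¹
  · rw [← comap_map_eq_self_of_injective H.subtype_injective (normalClosure _)]
    refine comap_mono ?_
    rw [normalClosure, closure_le]
    intro g hg
    obtain ⟨s, hs, hsg⟩ := Group.mem_conjugatesOfSet_iff.mp hg
    obtain ⟨c, rfl⟩ := isConj_iff.mp hsg
    exact conj_mem_map_normalClosure_cosetConjugates hSH hs c

theorem IsFinitelyNormallyGenerated.subgroupOf {N : Subgroup F}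
    (hN : N.IsFinitelyNormallyGenerated) [H.FiniteIndex] (hNH : N ≤ H) :
    (N.subgroupOf H).IsFinitelyNormallyGenerated := by
  obtain ⟨S, hS, rfl⟩ := hN
  exact ⟨_, H.cosetConjugates_finite S hS, normalClosure_cosetConjugates hNH⟩

end Subgroup

theorem MonoidHom.ker_subgroupComap {G G' : Type*} [Group G] [Group G'] (f : G →* G')
    (K : Subgroup G') : (f.subgroupComap K).ker = f.ker.subgroupOf (K.comap f) := by
  ext x
  rw [mem_ker, Subgroup.mem_subgroupOf, mem_ker, ← OneMemClass.coe_eq_one]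
  rfl

theorem Group.IsFinitelyPresented.of_finiteIndex {G : Type*} [Group G] [IsFinitelyPresented G]
    (K : Subgroup G) [K.FiniteIndex] : IsFinitelyPresented K := by
  obtain ⟨n, φ, hφ, hker⟩ := ‹IsFinitelyPresented G›
  have : (K.comap φ).FiniteIndex :=
    ⟨(K.index_comap_of_surjective hφ).trans_ne Subgroup.FiniteIndex.index_ne_zero⟩
  refine .of_surjective (φ.subgroupComap K) (φ.subgroupComap_surjective_of_surjective K hφ) ?_
  rw [MonoidHom.ker_subgroupComap]
  exact hker.subgroupOf (φ.ker_le_comap K)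

theorem finiteIndex_subgroup_finitely_presented {G : Type} [Group G]
    (hG : FinPresented G) (K : Subgroup G) (hK : K.index ≠ 0) :
    FinPresented K := by
  have := finPresented_iff_isFinitelyPresented.mp hG
  have : K.FiniteIndex := ⟨hK⟩
  exact finPresented_iff_isFinitelyPresented.mpr (.of_finiteIndex K)
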